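/- arXiv:1105.5366 — 7 statements merged into one kernel-verified Lean document; each statement's English description precedes it below -/
import Mathlib

section
/- For 0 < q < 1, define the q-number [a]_q = (q^{-a} - q^a)/(q^{-1} - q). Then for every l in (1/2)ℕ with 2l ≥ 1 and every integer n with 0 ≤ n ≤ 2l-1, one has [l + 1/2]_q^2 - [n/2]_q^2 ≥ [2l]_q, with equality when n = 2l - 1. -/
noncomputable def qnum (q a : ℝ) : ℝ := (q ^ (-a) - q ^ a) / (q⁻¹ - q)

lemma qnum_diff (q : ℝ) (hq0 : 0 < q) (hq1 : q < 1) (a b c : ℝ) (hac : 2 * a = c + 1) :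
    qnum q a ^ 2 - qnum q b ^ 2 - qnum q c
      = ((q ^ (c - 1) + q ^ (-(c - 1))) - (q ^ (2 * b) + q ^ (-(2 * b)))) / (q⁻¹ - q) ^ 2 := by
  have h1 : (1:ℝ) < q⁻¹ := one_lt_inv_iff₀.mpr ⟨hq0, hq1⟩
  have hdpos : (0:ℝ) < q⁻¹ - q := by linarith
  have hd : q⁻¹ - q ≠ 0 := ne_of_gt hdpos
  have hmul : ∀ x y : ℝ, q ^ x * q ^ y = q ^ (x + y) := fun x y =>
    (Real.rpow_add hq0 x y).symm
  have hcongr : ∀ x y : ℝ, x = y → q ^ x = q ^ y := fun x y h => by rw [h]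
  have f1 : q ^ (-a) * q ^ (-a) = q ^ (-c) * q ^ (-1:ℝ) := by
    rw [hmul, hmul]; exact hcongr _ _ (by linarith)
  have f2 : q ^ a * q ^ a = q ^ c * q := by
    rw [hmul, show a + a = c + 1 by linarith, Real.rpow_add hq0, Real.rpow_one]
  have f3 : q ^ (-a) * q ^ a = 1 := by rw [hmul]; simp
  have f4 : q ^ (-b) * q ^ b = 1 := by rw [hmul]; simp
  have f5 : q ^ (-b) * q ^ (-b) = q ^ (-(2*b)) := by
    rw [hmul]; exact hcongr _ _ (by ring)
  have f6 : q ^ b * q ^ b = q ^ (2*b) := by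
    rw [hmul]; exact hcongr _ _ (by ring)
  have f7 : q ^ (-c) * q = q ^ (-(c-1)) := by
    rw [show -(c-1) = -c + 1 by ring, Real.rpow_add hq0, Real.rpow_one]
  have f8 : q ^ c * q ^ (-1:ℝ) = q ^ (c-1) := by
    rw [hmul]; exact hcongr _ _ (by ring)
  have hinv : q⁻¹ = q ^ (-1 : ℝ) := (Real.rpow_neg_one q).symm
  have key : (q^(-a) - q^a)^2 - (q^(-b) - q^b)^2 - (q^(-c) - q^c)*(q⁻¹ - q)
      = (q ^ (c - 1) + q ^ (-(c - 1))) - (q ^ (2 * b) + q ^ (-(2 * b))) := by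
    rw [hinv]
    linear_combination f1 + f2 - 2*f3 + 2*f4 - f5 - f6 + f7 + f8
  have hc : qnum q c = ((q^(-c) - q^c)*(q⁻¹ - q))/(q⁻¹ - q)^2 := by
    unfold qnum; rw [sq]; exact (mul_div_mul_right _ _ hd).symm
  unfold qnum at *
  rw [div_pow, div_pow, hc, div_sub_div_same, div_sub_div_same, key]

theorem stmt0 (q : ℝ) (hq0 : 0 < q) (hq1 : q < 1) (L : ℕ) (hL : 1 ≤ L)
    (n : ℕ) (hn : n ≤ L - 1) :
    qnum q ((L : ℝ) / 2 + 1 / 2) ^ 2 - qnum q ((n : ℝ) / 2) ^ 2 ≥ qnum q (L : ℝ) ∧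
    (n = L - 1 →
      qnum q ((L : ℝ) / 2 + 1 / 2) ^ 2 - qnum q ((n : ℝ) / 2) ^ 2 = qnum q (L : ℝ)) := by
  have hdiff := qnum_diff q hq0 hq1 ((L : ℝ) / 2 + 1 / 2) ((n : ℝ) / 2) (L : ℝ) (by ring)
  have h1 : (1:ℝ) < q⁻¹ := one_lt_inv_iff₀.mpr ⟨hq0, hq1⟩
  have hdpos : (0:ℝ) < q⁻¹ - q := by linarith
  have hd2 : (0:ℝ) < (q⁻¹ - q)^2 := by positivity
  have hnl : (n:ℝ) ≤ (L:ℝ) - 1 := by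
    have : (n:ℝ) ≤ ((L - 1 : ℕ) : ℝ) := by exact_mod_cast hn
    rwa [Nat.cast_sub hL, Nat.cast_one] at this
  rw [show 2 * ((n:ℝ)/2) = (n:ℝ) by ring] at hdiff
  have mono : ∀ u v : ℝ, 0 ≤ v → v ≤ u → q ^ v + q ^ (-v) ≤ q ^ u + q ^ (-u) := by
    intro u v hv hvu
    have hmul : ∀ x y : ℝ, q ^ x * q ^ y = q ^ (x + y) := fun x y =>
      (Real.rpow_add hq0 x y).symm
    have g1 : q ^ (-u) * q ^ (u+v) = q ^ v := by rw [hmul]; congr 1; ring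
    have g2 : q ^ (-u) * q ^ (u-v) = q ^ (-v) := by rw [hmul]; congr 1; ring
    have g3 : q ^ (-u) * (q ^ (u+v) * q ^ (u-v)) = q ^ u := by
      rw [hmul, hmul]; congr 1; ring
    have factor : q ^ u + q ^ (-u) - (q ^ v + q ^ (-v))
        = q ^ (-u) * ((1 - q ^ (u+v)) * (1 - q ^ (u-v))) := by
      linear_combination g1 + g2 - g3
    have p1 : q ^ (u+v) ≤ 1 := Real.rpow_le_one hq0.le hq1.le (by linarith)
    have p2 : q ^ (u-v) ≤ 1 := Real.rpow_le_one hq0.le hq1.le (by linarith)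
    have p3 : (0:ℝ) < q ^ (-u) := Real.rpow_pos_of_pos hq0 _
    have p4 : 0 ≤ q ^ (-u) * ((1 - q ^ (u+v)) * (1 - q ^ (u-v))) :=
      mul_nonneg p3.le (mul_nonneg (by linarith) (by linarith))
    linarith
  constructor
  · have hm := mono ((L:ℝ) - 1) (n:ℝ) (Nat.cast_nonneg n) hnl
    have : 0 ≤ qnum q ((L : ℝ) / 2 + 1 / 2) ^ 2 - qnum q ((n : ℝ) / 2) ^ 2 - qnum q (L : ℝ) := by
      rw [hdiff]; apply div_nonneg _ hd2.le; linarith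
    linarith
  · intro hnL
    have hcast : (n:ℝ) = (L:ℝ) - 1 := by
      subst hnL; rw [Nat.cast_sub hL, Nat.cast_one]
    rw [hcast] at hdiff
    have : qnum q ((L : ℝ) / 2 + 1 / 2) ^ 2 - qnum q ((n : ℝ) / 2) ^ 2 - qnum q (L : ℝ) = 0 := by
      rw [hcast, hdiff]; simp
    linarith
end

section
/- For 0 < q < 1, set Q = 1/(q^{-1} - q) and λ_{l,n}^2 = (n/2)^2 + q^n([l+1/2]_q^2 - [n/2]_q^2). Then for l ∈ (1/2)ℕ, 2l ≥ 1, and integer 0 ≤ n ≤ 2l-1, one has 1 + λ_{l,n}^2 ≥ 1 + (n/2)^2 + q^{n-2l+1}. -/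
/-- `λ_{l,n}²` for `l` given as a real number. -/
noncomputable def lamSq (q l n : ℝ) : ℝ :=
  (n / 2) ^ 2 + q ^ n * ((qnum q (l + 1 / 2)) ^ 2 - (qnum q (n / 2)) ^ 2)

/-!
Put `a = n/2`, `b = l + 1/2` (so `a + 1 ≤ b`), `u = q^b`, `v = q^a`; then `u ≤ q v ≤ q`. After
clearing the denominator `(q⁻¹ - q)²`, the inequality `q^{2a} ([b]_q² - [a]_q²) ≥ q^{2a-2b+2}`
becomes `E ≥ 0`, where, with `r = q v / u ≥ 1` and `w = u v / q ≤ 1`,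
  `E = (r² - 1)(2 - q² - w²) + (1 - q²)(1 - w²)`,
a sum of two nonnegative products.
-/

lemma sq_div_le_mul_sub_sq {q u v : ℝ} (hq0 : 0 < q) (hq1 : q < 1) (hv0 : 0 < v) (hv1 : v ≤ 1)
    (hu0 : 0 < u) (huv : u ≤ q * v) :
    (q * v / u) ^ 2 ≤
      v ^ 2 * (((u⁻¹ - u) / (q⁻¹ - q)) ^ 2 - ((v⁻¹ - v) / (q⁻¹ - q)) ^ 2) := by
  set r := q * v / u with hr
  set w := u * v / q with hw
  have hr1 : 1 ≤ r := by rw [hr, le_div_iff₀ hu0]; linarith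
  have hw1 : w ≤ 1 := by
    rw [hw, div_le_one hq0]
    nlinarith [mul_le_mul_of_nonneg_right huv hv0.le]
  have hq2 : q ^ 2 < 1 := by nlinarith
  have hw2 : w ^ 2 ≤ 1 := by nlinarith [show 0 < w by positivity]
  have hE : v ^ 2 * (((u⁻¹ - u) / (q⁻¹ - q)) ^ 2 - ((v⁻¹ - v) / (q⁻¹ - q)) ^ 2) - r ^ 2 =
      q ^ 2 * ((r ^ 2 - 1) * (2 - q ^ 2 - w ^ 2) + (1 - q ^ 2) * (1 - w ^ 2)) /
        (1 - q ^ 2) ^ 2 := by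
    have : 1 - q ^ 2 ≠ 0 := by linarith
    have : q⁻¹ - q ≠ 0 := (sub_pos.2 (hq1.trans ((one_lt_inv₀ hq0).2 hq1))).ne'
    rw [hr, hw]
    field_simp
    ring
  have hE0 : 0 ≤ (r ^ 2 - 1) * (2 - q ^ 2 - w ^ 2) + (1 - q ^ 2) * (1 - w ^ 2) := by
    have : 1 ≤ r ^ 2 := one_le_pow₀ hr1
    apply add_nonneg <;> apply mul_nonneg <;> linarith
  rw [← sub_nonneg, hE]
  positivity

lemma rpow_le_rpow_mul_sq_sub_sq_qnum {q a b : ℝ} (hq0 : 0 < q) (hq1 : q < 1) (ha : 0 ≤ a)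
    (hab : a + 1 ≤ b) :
    q ^ (2 * a - 2 * b + 2) ≤ q ^ (2 * a) * (qnum q b ^ 2 - qnum q a ^ 2) := by
  have hv1 : q ^ a ≤ 1 := Real.rpow_le_one hq0.le hq1.le ha
  have huv : q ^ b ≤ q * q ^ a := by
    calc q ^ b ≤ q ^ (a + 1) := Real.rpow_le_rpow_of_exponent_ge hq0 hq1.le hab
      _ = q * q ^ a := by rw [Real.rpow_add_one hq0.ne', mul_comm]
  have hexp : q ^ (2 * a - 2 * b + 2) = (q * q ^ a / q ^ b) ^ 2 := by
    rw [mul_comm q, ← Real.rpow_add_one hq0.ne', ← Real.rpow_sub hq0,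
      ← Real.rpow_mul_natCast hq0.le]
    congr 1
    push_cast
    ring
  have hsq : q ^ (2 * a) = (q ^ a) ^ 2 := by
    rw [← Real.rpow_mul_natCast hq0.le, mul_comm]
    norm_num
  rw [hexp, hsq, qnum, qnum, Real.rpow_neg hq0.le, Real.rpow_neg hq0.le]
  exact sq_div_le_mul_sub_sq hq0 hq1 (by positivity) hv1 (by positivity) huv

theorem stmt1 (q : ℝ) (hq0 : 0 < q) (hq1 : q < 1) (L : ℕ) (hL : 1 ≤ L)
    (n : ℕ) (hn : n ≤ L - 1) :
    1 + lamSq q ((L : ℝ) / 2) (n : ℝ) ≥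
      1 + ((n : ℝ) / 2) ^ 2 + q ^ ((n : ℝ) - (L : ℝ) + 1) := by
  have hnL : (n : ℝ) + 1 ≤ L := by exact_mod_cast (by omega : n + 1 ≤ L)
  have key := rpow_le_rpow_mul_sq_sub_sq_qnum (a := n / 2) (b := L / 2 + 1 / 2) hq0 hq1
    (by positivity) (by linarith)
  rw [show 2 * ((n : ℝ) / 2) - 2 * (L / 2 + 1 / 2) + 2 = n - L + 1 by ring,
    show 2 * ((n : ℝ) / 2) = n by ring] at key
  rw [lamSq]
  linarith
end

section
/- For 0 < q < 1, the double series f₂(z) = ∑_{2l=1}^∞ ∑_{n ∈ J_l} (2l+1) q^{2l-n} (1 + λ_{l,n}^2)^{-z/2} converges absolutely for every complex z with Re(z) > 2, where J_l and λ_{l,n} are as in the standard SU_q(2) setup. -/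
/-- Index set: pairs `(L, n)` with `L = 2l ≥ 1`, `0 ≤ n ≤ 2l - 1` and
`n ≡ 2l - 1 (mod 2)`, i.e. `n ∈ J_l`. -/
def Jidx : Set (ℕ × ℕ) := {p | 1 ≤ p.1 ∧ p.2 + 1 ≤ p.1 ∧ (p.1 - 1 - p.2) % 2 = 0}


/-!
Since `n ≤ 2l + 1`, monotonicity of `a ↦ [a]_q` gives `λ_{l,n}² ≥ (n/2)²`, so
`(1 + λ_{l,n}²)^{-s/2} ≤ 3^s (n+1)^{-s}` with `s = Re z`. Writing `k = 2l - n`, the weight is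
`(2l+1) q^k ≤ (n+1)(k+1) q^k`, so the series is dominated by the product of
`∑ₙ (n+1)^{1-s}`, finite for `s > 2`, and the geometric-type series `∑ₖ (k+1) q^k`.
-/

open Real

lemma qnum_zero (q : ℝ) : qnum q 0 = 0 := by
  simp [qnum]

lemma qnum_monotone {q : ℝ} (hq0 : 0 < q) (hq1 : q < 1) : Monotone (qnum q) := by
  intro a b hab
  have hden : 0 < q⁻¹ - q := by linarith [(one_lt_inv₀ hq0).mpr hq1]
  have hneg : q ^ (-a) ≤ q ^ (-b) := rpow_le_rpow_of_exponent_ge hq0 hq1.le (by linarith)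
  have hpos : q ^ b ≤ q ^ a := rpow_le_rpow_of_exponent_ge hq0 hq1.le hab
  unfold qnum
  gcongr

lemma qnum_nonneg {q a : ℝ} (hq0 : 0 < q) (hq1 : q < 1) (ha : 0 ≤ a) : 0 ≤ qnum q a :=
  qnum_zero q ▸ qnum_monotone hq0 hq1 ha

lemma sq_half_le_lamSq {q l n : ℝ} (hq0 : 0 < q) (hq1 : q < 1) (hn : 0 ≤ n)
    (hnl : n ≤ 2 * l + 1) : (n / 2) ^ 2 ≤ lamSq q l n := by
  have hle : qnum q (n / 2) ^ 2 ≤ qnum q (l + 1 / 2) ^ 2 :=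
    pow_le_pow_left₀ (qnum_nonneg hq0 hq1 (by positivity)) (qnum_monotone hq0 hq1 (by linarith)) 2
  have hqn : 0 ≤ q ^ n := (rpow_pos_of_pos hq0 n).le
  unfold lamSq
  nlinarith

lemma rpow_neg_half_le_of_sq_le {a x s : ℝ} (ha : 0 < a) (hax : a ^ 2 ≤ x) (hs : 0 ≤ s) :
    x ^ (-s / 2) ≤ a ^ (-s) :=
  calc x ^ (-s / 2) ≤ (a ^ 2) ^ (-s / 2) := rpow_le_rpow_of_nonpos (by positivity) hax (by linarith)
    _ = a ^ (-s) := by rw [← rpow_natCast_mul ha.le]; congr 1; push_cast; ring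

lemma sq_le_one_add_lamSq {q : ℝ} (hq0 : 0 < q) (hq1 : q < 1) {L n : ℕ} (hn : n ≤ L) :
    (((n : ℝ) + 1) / 3) ^ 2 ≤ 1 + lamSq q ((L : ℝ) / 2) n := by
  have hlam : ((n : ℝ) / 2) ^ 2 ≤ lamSq q ((L : ℝ) / 2) n :=
    sq_half_le_lamSq hq0 hq1 n.cast_nonneg (by linarith [(Nat.cast_le (α := ℝ)).mpr hn])
  nlinarith [sq_nonneg (5 * (n : ℝ) - 4)]

lemma one_add_lamSq_pos {q : ℝ} (hq0 : 0 < q) (hq1 : q < 1) {L n : ℕ} (hn : n ≤ L) :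
    0 < 1 + lamSq q ((L : ℝ) / 2) n :=
  lt_of_lt_of_le (by positivity) (sq_le_one_add_lamSq hq0 hq1 hn)

lemma one_add_lamSq_rpow_le {q s : ℝ} (hq0 : 0 < q) (hq1 : q < 1) (hs : 0 ≤ s) {L n : ℕ}
    (hn : n ≤ L) :
    (1 + lamSq q ((L : ℝ) / 2) n) ^ (-s / 2) ≤ 3 ^ s * ((n : ℝ) + 1) ^ (-s) :=
  calc (1 + lamSq q ((L : ℝ) / 2) n) ^ (-s / 2) ≤ (((n : ℝ) + 1) / 3) ^ (-s) :=
        rpow_neg_half_le_of_sq_le (by positivity) (sq_le_one_add_lamSq hq0 hq1 hn) hs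
    _ = 3 ^ s * ((n : ℝ) + 1) ^ (-s) := by
        rw [div_rpow (by positivity) (by norm_num), rpow_neg (by norm_num : (0 : ℝ) ≤ 3),
          div_inv_eq_mul, mul_comm]

lemma summable_nat_add_one_rpow {p : ℝ} (hp : p < -1) :
    Summable (fun n : ℕ => ((n : ℝ) + 1) ^ p) := by
  have h := (summable_nat_add_iff 1).mpr (summable_nat_rpow.mpr hp)
  exact h.congr fun n => by push_cast; rfl

lemma summable_nat_add_one_mul_geometric {q : ℝ} (hq0 : 0 ≤ q) (hq1 : q < 1) :
    Summable (fun k : ℕ => ((k : ℝ) + 1) * q ^ k) := by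
  have hq : ‖q‖ < 1 := by rwa [norm_of_nonneg hq0]
  have h := (summable_pow_mul_geometric_of_norm_lt_one 1 hq).add
    (summable_geometric_of_lt_one hq0 hq1)
  exact h.congr fun k => by ring

def Jidx.toSplit (p : Jidx) : ℕ × ℕ := (p.1.2, p.1.1 - p.1.2)

lemma Jidx.toSplit_injective : Function.Injective Jidx.toSplit := by
  intro p p' heq
  have hp := p.2.2.1
  have hp' := p'.2.2.1
  simp only [Jidx.toSplit, Prod.mk.injEq] at heq
  exact Subtype.ext (Prod.ext (by omega) (by omega))

lemma norm_ofReal_mul_ofReal_cpow {a x : ℝ} (ha : 0 ≤ a) (hx : 0 < x) (w : ℂ) :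
    ‖(a : ℂ) * (x : ℂ) ^ w‖ = a * x ^ w.re := by
  rw [norm_mul, Complex.norm_real, Complex.norm_cpow_eq_rpow_re_of_pos hx, norm_of_nonneg ha]

lemma weight_mul_one_add_lamSq_rpow_le {q s : ℝ} (hq0 : 0 < q) (hq1 : q < 1) (hs : 0 ≤ s) {L n : ℕ}
    (hn : n ≤ L) :
    ((L : ℝ) + 1) * q ^ ((L : ℝ) - n) * (1 + lamSq q ((L : ℝ) / 2) n) ^ (-s / 2) ≤
      3 ^ s * (((n : ℝ) + 1) ^ (1 - s) * ((((L - n : ℕ) : ℝ) + 1) * q ^ (L - n))) := by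
  have hk : ((L : ℝ) - n) = ((L - n : ℕ) : ℝ) := by push_cast [hn]; ring
  have hweight : (L : ℝ) + 1 ≤ ((n : ℝ) + 1) * (((L - n : ℕ) : ℝ) + 1) := by
    push_cast [hn]; nlinarith [(Nat.cast_le (α := ℝ)).mpr hn, n.cast_nonneg (α := ℝ)]
  have hsplit : ((n : ℝ) + 1) ^ (1 - s) = ((n : ℝ) + 1) * ((n : ℝ) + 1) ^ (-s) := by
    rw [sub_eq_add_neg, rpow_add (by positivity), rpow_one]
  rw [hk, rpow_natCast, hsplit]
  calc ((L : ℝ) + 1) * q ^ (L - n) * (1 + lamSq q ((L : ℝ) / 2) n) ^ (-s / 2)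
      ≤ ((n : ℝ) + 1) * (((L - n : ℕ) : ℝ) + 1) * q ^ (L - n) *
          (3 ^ s * ((n : ℝ) + 1) ^ (-s)) :=
        mul_le_mul (mul_le_mul_of_nonneg_right hweight (by positivity))
          (one_add_lamSq_rpow_le hq0 hq1 hs hn)
          (rpow_nonneg (one_add_lamSq_pos hq0 hq1 hn).le _) (by positivity)
    _ = _ := by ring

theorem stmt6 (q : ℝ) (hq0 : 0 < q) (hq1 : q < 1) (z : ℂ) (hz : 2 < z.re) :
    Summable (fun p : Jidx =>
      ‖((((p.1.1 : ℝ) + 1) * q ^ ((p.1.1 : ℝ) - (p.1.2 : ℝ)) : ℝ) : ℂ) *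
        ((1 + lamSq q ((p.1.1 : ℝ) / 2) (p.1.2 : ℝ) : ℝ) : ℂ) ^ (-z / 2)‖) := by
  have hmajorant : Summable (fun p : ℕ × ℕ =>
      ((p.1 : ℝ) + 1) ^ (1 - z.re) * (((p.2 : ℝ) + 1) * q ^ p.2)) :=
    (summable_nat_add_one_rpow (by linarith)).mul_of_nonneg
      (summable_nat_add_one_mul_geometric hq0.le hq1) (fun _ => by positivity)
      (fun _ => by positivity)
  refine Summable.of_nonneg_of_le (fun _ => norm_nonneg _) ?_
    ((hmajorant.comp_injective Jidx.toSplit_injective).mul_left (3 ^ z.re))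
  rintro ⟨⟨L, n⟩, -, hn, -⟩
  have hnL : n ≤ L := Nat.le_of_succ_le hn
  rw [norm_ofReal_mul_ofReal_cpow (by positivity) (one_add_lamSq_pos hq0 hq1 hnL)]
  simpa [Jidx.toSplit, neg_div] using
    weight_mul_one_add_lamSq_rpow_le hq0 hq1 (by linarith : 0 ≤ z.re) hnL
end

section
/- Let A be a unital algebra over ℂ, ϑ, σ₀, σ₁, σ₂, σ₃ algebra automorphisms of A, ∫ : A → ℂ a linear functional satisfying ∫(αβ) = ∫(σ₀(ϑ^{-1}(σ₃^{-1}(β)))α) for all α, β ∈ A, and ∂ᵢ : A → A (i = 1,2,3) linear maps satisfying ∂ᵢ(αβ) = σ_{i-1}(α)∂ᵢ(β) + ∂ᵢ(α)σᵢ(β). Then the 4-linear functional φ(a₀,a₁,a₂,a₃) = ∫(σ₀(a₀)∂₁(a₁)∂₂(a₂)∂₃(a₃)) is a ϑ^{-1}-twisted Hochschild 3-cocycle, i.e. b_{ϑ^{-1}}φ = 0, where (b_{ϑ^{-1}}φ)(a₀,...,a₄) = ∑_{i=0}^{3}(-1)^i φ(a₀,...,aᵢa_{i+1},...,a₄) +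 φ(ϑ^{-1}(a₄)a₀,a₁,a₂,a₃). -/
theorem stmt10 (A : Type*) [Ring A] [Algebra ℂ A]
    (ϑ σ₀ σ₁ σ₂ σ₃ : A ≃ₐ[ℂ] A)
    (I : A →ₗ[ℂ] ℂ)
    (hI : ∀ α β : A, I (α * β) = I (σ₀ (ϑ.symm (σ₃.symm β)) * α))
    (D₁ D₂ D₃ : A →ₗ[ℂ] A)
    (hD₁ : ∀ α β : A, D₁ (α * β) = σ₀ α * D₁ β + D₁ α * σ₁ β)
    (hD₂ : ∀ α β : A, D₂ (α * β) = σ₁ α * D₂ β + D₂ α * σ₂ β)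
    (hD₃ : ∀ α β : A, D₃ (α * β) = σ₂ α * D₃ β + D₃ α * σ₃ β) :
    ∀ a₀ a₁ a₂ a₃ a₄ : A,
      I (σ₀ (a₀ * a₁) * D₁ a₂ * D₂ a₃ * D₃ a₄)
      - I (σ₀ a₀ * D₁ (a₁ * a₂) * D₂ a₃ * D₃ a₄)
      + I (σ₀ a₀ * D₁ a₁ * D₂ (a₂ * a₃) * D₃ a₄)
      - I (σ₀ a₀ * D₁ a₁ * D₂ a₂ * D₃ (a₃ * a₄))
      + I (σ₀ (ϑ.symm a₄ * a₀) * D₁ a₁ * D₂ a₂ * D₃ a₃) = 0 := by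
  intro a₀ a₁ a₂ a₃ a₄
  have h := hI (σ₀ a₀ * D₁ a₁ * D₂ a₂ * D₃ a₃) (σ₃ a₄)
  simp only [AlgEquiv.symm_apply_apply] at h
  simp only [map_mul, hD₁, hD₂, hD₃, mul_add, add_mul, map_add, mul_assoc] at *
  rw [h]
  ring
end

section
/- In the setting of the cup-product 3-cocycle ∫⌣∂₁⌣∂₂⌣∂₃ (with automorphisms σ₀,...,σ₃, twisted trace ∫, and twisted derivations ∂ᵢ), define ∂̃₃ = σ₁σ₂^{-1}∂₃ and ∂̃₂ = ∂₂σ₂^{-1}σ₃. Then (∫⌣∂₁⌣∂₂⌣∂₃) + (∫⌣∂₁⌣∂̃₃⌣∂̃₂) = b_{ϑ^{-1}}ψ₁₃₂, where ψ₁₃₂(a₀,a₁,a₂) = ∫(σ₀(a₀)∂₁(a₁)∂₂(σ₂^{-1}(∂₃(a₂)))). -/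
theorem stmt11 (A : Type*) [Ring A] [Algebra ℂ A]
    (ϑ σ₀ σ₁ σ₂ σ₃ : A ≃ₐ[ℂ] A)
    (I : A →ₗ[ℂ] ℂ)
    (hI : ∀ α β : A, I (α * β) = I (σ₀ (ϑ.symm (σ₃.symm β)) * α))
    (D₁ D₂ D₃ : A →ₗ[ℂ] A)
    (hD₁ : ∀ α β : A, D₁ (α * β) = σ₀ α * D₁ β + D₁ α * σ₁ β)
    (hD₂ : ∀ α β : A, D₂ (α * β) = σ₁ α * D₂ β + D₂ α * σ₂ β)
    (hD₃ : ∀ α β : A, D₃ (α * β) = σ₂ α * D₃ β + D₃ α * σ₃ β) :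
    ∀ a₀ a₁ a₂ a₃ : A,
      -- (∫⌣∂₁⌣∂₂⌣∂₃)(a₀,a₁,a₂,a₃) + (∫⌣∂₁⌣∂̃₃⌣∂̃₂)(a₀,a₁,a₂,a₃)
      I (σ₀ a₀ * D₁ a₁ * D₂ a₂ * D₃ a₃)
      + I (σ₀ a₀ * D₁ a₁ * σ₁ (σ₂.symm (D₃ a₂)) * D₂ (σ₂.symm (σ₃ a₃)))
      =
      -- (b_{ϑ⁻¹} ψ₁₃₂)(a₀,a₁,a₂,a₃) with ψ₁₃₂(x,y,z) = ∫ σ₀(x) ∂₁(y) ∂₂(σ₂⁻¹(∂₃ z))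
      I (σ₀ (a₀ * a₁) * D₁ a₂ * D₂ (σ₂.symm (D₃ a₃)))
      - I (σ₀ a₀ * D₁ (a₁ * a₂) * D₂ (σ₂.symm (D₃ a₃)))
      + I (σ₀ a₀ * D₁ a₁ * D₂ (σ₂.symm (D₃ (a₂ * a₃))))
      - I (σ₀ (ϑ.symm a₃ * a₀) * D₁ a₁ * D₂ (σ₂.symm (D₃ a₂))) := by
  intro a₀ a₁ a₂ a₃
  have h3 : σ₂.symm (D₃ (a₂ * a₃))
      = a₂ * σ₂.symm (D₃ a₃) + σ₂.symm (D₃ a₂) * σ₂.symm (σ₃ a₃) := by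
    rw [hD₃]; simp [map_add, map_mul]
  have h4 : I (σ₀ (ϑ.symm a₃ * a₀) * D₁ a₁ * D₂ (σ₂.symm (D₃ a₂)))
      = I (σ₀ a₀ * D₁ a₁ * D₂ (σ₂.symm (D₃ a₂)) * σ₃ a₃) := by
    rw [hI (σ₀ a₀ * D₁ a₁ * D₂ (σ₂.symm (D₃ a₂))) (σ₃ a₃)]
    simp [map_mul, mul_assoc]
  rw [h3, map_add, hD₂, hD₂, map_mul σ₀ a₀ a₁, hD₁ a₁ a₂, h4]
  simp only [AlgEquiv.apply_symm_apply]
  simp only [mul_add, add_mul, map_add, mul_assoc]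
  abel
end

section
/- In the setting of the cup-product 3-cocycle ∫⌣∂₁⌣∂₂⌣∂₃, define ∂̂₂ = σ₀σ₁^{-1}∂₂ and ∂̂₁ = ∂₁σ₁^{-1}σ₂. Then (∫⌣∂₁⌣∂₂⌣∂₃) + (∫⌣∂̂₂⌣∂̂₁⌣∂₃) = b_{ϑ^{-1}}ψ₂₁₃, where ψ₂₁₃(a₀,a₁,a₂) = -∫(σ₀(a₀)∂₁(σ₁^{-1}(∂₂(a₁)))∂₃(a₂)). -/
theorem stmt12 (A : Type*) [Ring A] [Algebra ℂ A]
    (ϑ σ₀ σ₁ σ₂ σ₃ : A ≃ₐ[ℂ] A)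
    (I : A →ₗ[ℂ] ℂ)
    (hI : ∀ α β : A, I (α * β) = I (σ₀ (ϑ.symm (σ₃.symm β)) * α))
    (D₁ D₂ D₃ : A →ₗ[ℂ] A)
    (hD₁ : ∀ α β : A, D₁ (α * β) = σ₀ α * D₁ β + D₁ α * σ₁ β)
    (hD₂ : ∀ α β : A, D₂ (α * β) = σ₁ α * D₂ β + D₂ α * σ₂ β)
    (hD₃ : ∀ α β : A, D₃ (α * β) = σ₂ α * D₃ β + D₃ α * σ₃ β) :
    ∀ a₀ a₁ a₂ a₃ : A,
      -- (∫⌣∂₁⌣∂₂⌣∂₃)(a₀,a₁,a₂,a₃) + (∫⌣∂̂₂⌣∂̂₁⌣∂₃)(a₀,a₁,a₂,a₃)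
      I (σ₀ a₀ * D₁ a₁ * D₂ a₂ * D₃ a₃)
      + I (σ₀ a₀ * σ₀ (σ₁.symm (D₂ a₁)) * D₁ (σ₁.symm (σ₂ a₂)) * D₃ a₃)
      =
      -- (b_{ϑ⁻¹} ψ₂₁₃)(a₀,a₁,a₂,a₃) with ψ₂₁₃(x,y,z) = -∫ σ₀(x) ∂₁(σ₁⁻¹(∂₂ y)) ∂₃(z)
      (-I (σ₀ (a₀ * a₁) * D₁ (σ₁.symm (D₂ a₂)) * D₃ a₃))
      - (-I (σ₀ a₀ * D₁ (σ₁.symm (D₂ (a₁ * a₂))) * D₃ a₃))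
      + (-I (σ₀ a₀ * D₁ (σ₁.symm (D₂ a₁)) * D₃ (a₂ * a₃)))
      - (-I (σ₀ (ϑ.symm a₃ * a₀) * D₁ (σ₁.symm (D₂ a₁)) * D₃ a₂)) := by
  intro a₀ a₁ a₂ a₃
  have h4 : I (σ₀ (ϑ.symm a₃ * a₀) * D₁ (σ₁.symm (D₂ a₁)) * D₃ a₂)
      = I (σ₀ a₀ * D₁ (σ₁.symm (D₂ a₁)) * D₃ a₂ * σ₃ a₃) := by
    rw [hI (σ₀ a₀ * D₁ (σ₁.symm (D₂ a₁)) * D₃ a₂) (σ₃ a₃)]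
    simp only [AlgEquiv.symm_apply_apply, map_mul, mul_assoc]
  rw [h4, hD₂ a₁ a₂, hD₃ a₂ a₃]
  simp only [map_add, map_mul, AlgEquiv.symm_apply_apply, AlgEquiv.apply_symm_apply,
    hD₁, mul_add, add_mul, ← mul_assoc]
  abel
end

section
/- For 0 < q < 1, set Q = (q^{-1}-q)^{-1} and C_{n,l} = 1 + Q² qⁿ(q^{2l+1} - 2) - qⁿ[n/2]_q², where [a]_q = (q^{-a}-q^a)/(q^{-1}-q). Then for all half-integers l ≥ 1/2 and integers 0 ≤ n ≤ 2l, one has |C_{n,l}| ≤ 1 + 3Q², and moreover 1 + λ_{l,n}² = n²/4 + Q² q^{-1} q^{n-2l} + C_{n,l}, where λ_{l,n}² = (n/2)² + qⁿ([l+1/2]_q² - [n/2]_q²). -/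
theorem stmt15 (q : ℝ) (hq0 : 0 < q) (hq1 : q < 1) (L n : ℕ)
    (hL : 1 ≤ L) (hn : n ≤ L) :
    |1 + ((q⁻¹ - q)⁻¹) ^ 2 * q ^ (n : ℝ) * (q ^ ((L : ℝ) + 1) - 2)
        - q ^ (n : ℝ) * (qnum q ((n : ℝ) / 2)) ^ 2|
      ≤ 1 + 3 * ((q⁻¹ - q)⁻¹) ^ 2 ∧
    1 + lamSq q ((L : ℝ) / 2) (n : ℝ) =
      (n : ℝ) ^ 2 / 4 + ((q⁻¹ - q)⁻¹) ^ 2 * q⁻¹ * q ^ ((n : ℝ) - (L : ℝ))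
      + (1 + ((q⁻¹ - q)⁻¹) ^ 2 * q ^ (n : ℝ) * (q ^ ((L : ℝ) + 1) - 2)
          - q ^ (n : ℝ) * (qnum q ((n : ℝ) / 2)) ^ 2) := by
  have hd : 0 < q⁻¹ - q := by
    have h1 : 1 < q⁻¹ := (one_lt_inv₀ hq0).mpr hq1
    linarith
  have hQ : 0 < (q⁻¹ - q)⁻¹ := inv_pos.2 hd
  set Q : ℝ := (q⁻¹ - q)⁻¹ with hQdef
  set a : ℝ := q ^ ((n:ℝ)/2) with ha
  set b : ℝ := q ^ (-((n:ℝ)/2)) with hb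
  set c : ℝ := q ^ ((L:ℝ)/2 + 1/2) with hc
  set d : ℝ := q ^ (-((L:ℝ)/2 + 1/2)) with hdd
  have hab : a * b = 1 := by
    rw [ha, hb, ← Real.rpow_add hq0,
      show ((n:ℝ)/2 + -((n:ℝ)/2)) = (0:ℝ) by ring, Real.rpow_zero]
  have hcd : c * d = 1 := by
    rw [hc, hdd, ← Real.rpow_add hq0,
      show ((L:ℝ)/2 + 1/2 + -((L:ℝ)/2 + 1/2)) = (0:ℝ) by ring, Real.rpow_zero]
  have haa : q ^ ((n:ℝ)) = a * a := by
    rw [ha, ← Real.rpow_add hq0]; congr 1; ring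
  have hcc : q ^ ((L:ℝ) + 1) = c * c := by
    rw [hc, ← Real.rpow_add hq0]; congr 1; ring
  have hw2 : d * d = q ^ (-((L:ℝ) + 1)) := by
    rw [hdd, ← Real.rpow_add hq0]; congr 1; ring
  have hw : q⁻¹ * q ^ ((n:ℝ) - (L:ℝ)) = (a * a) * (d * d) := by
    rw [← haa, hw2, ← Real.rpow_add hq0, ← Real.rpow_neg_one q,
      ← Real.rpow_add hq0]
    congr 1; ring
  have hx0 : 0 < a * a := by
    rw [← haa]; exact Real.rpow_pos_of_pos hq0 _
  have hx1 : a * a ≤ 1 := by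
    rw [← haa]
    exact Real.rpow_le_one hq0.le hq1.le (by positivity)
  have hu0 : 0 < c * c := by
    rw [← hcc]; exact Real.rpow_pos_of_pos hq0 _
  have hu1 : c * c ≤ 1 := by
    rw [← hcc]
    exact Real.rpow_le_one hq0.le hq1.le (by positivity)
  have hqn : q ^ ((n:ℝ)) * (qnum q ((n:ℝ)/2)) ^ 2 = Q ^ 2 * (1 - a * a) ^ 2 := by
    rw [qnum, haa, div_eq_mul_inv, ← hQdef, ← hb, ← ha]
    linear_combination (Q^2 * (a*b + 1 - 2*a*a)) * hab
  clear_value Q a b c d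
  constructor
  · rw [hqn, haa, hcc]
    have key : 1 + Q ^ 2 * (a*a) * (c*c - 2) - Q ^ 2 * (1 - a*a) ^ 2
        = 1 + Q ^ 2 * ((a*a)*(c*c) - (a*a)^2 - 1) := by ring
    rw [key, abs_le]
    have h1 : 0 ≤ Q^2 * ((a*a)*(c*c)) :=
      mul_nonneg (sq_nonneg Q) (mul_pos hx0 hu0).le
    have h2 : Q^2 * ((a*a)*(a*a)) ≤ Q^2 * 1 :=
      mul_le_mul_of_nonneg_left (mul_le_one₀ hx1 hx0.le hx1) (sq_nonneg Q)
    have h3 : Q^2 * ((a*a)*(c*c)) ≤ Q^2 * 1 :=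
      mul_le_mul_of_nonneg_left (mul_le_one₀ hx1 hu0.le hu1) (sq_nonneg Q)
    have h4 : 0 ≤ Q^2 * ((a*a)*(a*a)) :=
      mul_nonneg (sq_nonneg Q) (mul_pos hx0 hx0).le
    constructor
    · nlinarith [sq_nonneg Q]
    · nlinarith [sq_nonneg Q]
  · have hw' : Q ^ 2 * q⁻¹ * q ^ ((n:ℝ) - (L:ℝ)) = Q ^ 2 * (a * a * (d * d)) := by
      rw [mul_assoc, hw]
    rw [lamSq, qnum, haa, hcc, hw']
    have hfr : (q ^ (-((L:ℝ) / 2 + 1 / 2)) - q ^ ((L:ℝ) / 2 + 1 / 2)) / (q⁻¹ - q)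
        = (d - c) * Q := by
      rw [hdd, hc, hQdef, div_eq_mul_inv]
    rw [hfr]
    linear_combination (-2 * Q^2 * (a*a)) * hcd
end
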